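/- A function f ∈ ℱ is an exposed point of ℱ if and only if f equals the indicator function 1_A almost everywhere for some up-set A ⊆ [0,1]^n. -/
import Mathlib


open MeasureTheory

noncomputable section

/-- The closed unit cube `[0,1]^n` in `ℝⁿ`. -/
def cube (n : ℕ) : Set (Fin n → ℝ) := Set.Icc 0 1

/-- `f` restricted to the cube is a monotone function with values in `[0,1]`. -/
def IsMonoCube (n : ℕ) (f : (Fin n → ℝ) → ℝ) : Prop :=
  (∀ x ∈ cube n, f x ∈ Set.Icc (0 : ℝ) 1) ∧
  ∀ x ∈ cube n, ∀ y ∈ cube n, x ≤ y → f x ≤ f y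

/-- `A` is an up-set of the cube `[0,1]^n`. -/
def UpSetIn (n : ℕ) (A : Set (Fin n → ℝ)) : Prop :=
  A ⊆ cube n ∧ ∀ x ∈ A, ∀ y ∈ cube n, x ≤ y → y ∈ A

/-- `f` is an exposed point of `ℱ`: `f ∈ ℱ` and some essentially bounded measurable `φ`
linearly separates `f` strictly from every `g ∈ ℱ` not a.e. equal to `f`. -/
def ExposedPtF (n : ℕ) (f : (Fin n → ℝ) → ℝ) : Prop :=
  IsMonoCube n f ∧
  ∃ φ : (Fin n → ℝ) → ℝ, Measurable φ ∧
    (∃ C : ℝ, ∀ᵐ x ∂(volume.restrict (cube n)), |φ x| ≤ C) ∧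
    ∀ g, IsMonoCube n g → ¬ g =ᵐ[volume.restrict (cube n)] f →
      (∫ x in cube n, g x * φ x) < ∫ x in cube n, f x * φ x

open Set ENNReal

lemma cube_meas (n : ℕ) : MeasurableSet (cube n) := measurableSet_Icc

lemma cube_finite (n : ℕ) : IsFiniteMeasure (volume.restrict (cube n)) :=
  ⟨by rw [Measure.restrict_apply_univ]; exact isCompact_Icc.measure_lt_top⟩

lemma antichain_null {n : ℕ} {R : Set (Fin n → ℝ)} (hR : MeasurableSet R)
    (hRc : R ⊆ cube n)
    (hanti : ∀ y ∈ R, ∀ z ∈ R, (∀ i, y i < z i) → False) : volume R = 0 := by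
  by_contra h0
  set c : ℕ → (Fin n → ℝ) := fun k => fun _ => 1 / (k + 1) with hc
  set S : ℕ → Set (Fin n → ℝ) := fun k => (fun x => x + c k) ⁻¹' R with hS
  have hmeas : ∀ k, MeasurableSet (S k) := fun k =>
    hR.preimage (measurable_id.add_const _)
  have hvol : ∀ k, volume (S k) = volume R := fun k =>
    measure_preimage_add_right volume (c k) R
  have hck : ∀ k : ℕ, 0 < (1 : ℝ) / (k + 1) ∧ (1 : ℝ) / (k + 1) ≤ 1 := by
    intro k
    constructor
    · positivity
    · rw [div_le_one (by positivity)]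
      have : (0:ℝ) ≤ (k:ℝ) := Nat.cast_nonneg k
      linarith
  have hdisj : Pairwise (Function.onFun Disjoint S) := by
    intro j k hjk
    have key : ∀ a b : ℕ, a < b → Disjoint (S a) (S b) := by
      intro a b hab
      rw [Set.disjoint_left]
      intro x hxa hxb
      have h1 : x + c b ∈ R := hxb
      have h2 : x + c a ∈ R := hxa
      refine hanti _ h1 _ h2 fun i => ?_
      simp only [hc, Pi.add_apply]
      have : (1:ℝ) / (b + 1) < 1 / (a + 1) := by
        apply one_div_lt_one_div_of_lt (by positivity)
        have : (a:ℝ) < b := by exact_mod_cast hab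
        linarith
      linarith
    rcases lt_or_gt_of_ne hjk with h | h
    · exact key j k h
    · exact (key k j h).symm
  have hsub : (⋃ k, S k) ⊆ Set.Icc (fun _ => (-1:ℝ)) (fun _ => (1:ℝ)) := by
    rintro x ⟨_, ⟨k, rfl⟩, hx⟩
    have hx' : x + c k ∈ cube n := hRc hx
    obtain ⟨hl, hr⟩ := hx'
    constructor
    · intro i
      have := hl i
      simp only [Pi.add_apply, Pi.zero_apply] at this
      have h1 := (hck k).2
      simp only [hc] at this ⊢
      linarith
    · intro i
      have := hr i
      simp only [Pi.add_apply, Pi.one_apply] at this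
      have h1 := (hck k).1
      simp only [hc] at this ⊢
      linarith
  have hfin : volume (Set.Icc (fun _ => (-1:ℝ)) (fun _ => (1:ℝ)) : Set (Fin n → ℝ)) < ⊤ :=
    isCompact_Icc.measure_lt_top
  have : (⊤ : ℝ≥0∞) ≤ volume (Set.Icc (fun _ => (-1:ℝ)) (fun _ => (1:ℝ)) : Set (Fin n → ℝ)) := by
    calc (⊤ : ℝ≥0∞) = ∑' _ : ℕ, volume R := (ENNReal.tsum_const_eq_top_of_ne_zero h0).symm
    _ = ∑' k, volume (S k) := by simp [hvol]
    _ = volume (⋃ k, S k) := (measure_iUnion hdisj hmeas).symm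
    _ ≤ _ := measure_mono hsub
  exact absurd (lt_of_le_of_lt this hfin) (lt_irrefl _)

lemma upset_approx {n : ℕ} {A : Set (Fin n → ℝ)} (hA : UpSetIn n A) :
    ∃ S : Set (Fin n → ℝ), MeasurableSet S ∧ S ⊆ A ∧ volume (A \ S) = 0 := by
  classical
  set U : Set (Fin n → ℝ) := ⋃ x ∈ A, Set.univ.pi fun i => Set.Ioi (x i) with hU
  set W : Set (Fin n → ℝ) := ⋃ x ∈ cube n \ A, Set.univ.pi fun i => Set.Iio (x i) with hW
  have hUo : IsOpen U := isOpen_biUnion fun x _ => isOpen_set_pi finite_univ fun i _ => isOpen_Ioi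
  have hWo : IsOpen W := isOpen_biUnion fun x _ => isOpen_set_pi finite_univ fun i _ => isOpen_Iio
  have hUmem : ∀ y, y ∈ U ↔ ∃ x ∈ A, ∀ i, x i < y i := by
    intro y
    simp [hU, Set.mem_pi]
  have hWmem : ∀ y, y ∈ W ↔ ∃ x ∈ cube n \ A, ∀ i, y i < x i := by
    intro y
    simp [hW, Set.mem_pi]
  set R : Set (Fin n → ℝ) := cube n \ (U ∪ W) with hR
  have hRanti : ∀ y ∈ R, ∀ z ∈ R, (∀ i, y i < z i) → False := by
    rintro y ⟨hyc, hy⟩ z ⟨hzc, hz⟩ hyz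
    set w : Fin n → ℝ := fun i => (y i + z i) / 2 with hw
    have hwc : w ∈ cube n := by
      constructor
      · intro i
        have h1 := hyc.1 i
        have h2 := hzc.1 i
        simp only [Pi.zero_apply] at h1 h2 ⊢
        simp only [hw]
        linarith
      · intro i
        have h1 := hyc.2 i
        have h2 := hzc.2 i
        simp only [Pi.one_apply] at h1 h2 ⊢
        simp only [hw]
        linarith
    have hyw : ∀ i, y i < w i := fun i => by simp only [hw]; linarith [hyz i]
    have hwz : ∀ i, w i < z i := fun i => by simp only [hw]; linarith [hyz i]
    by_cases hwA : w ∈ A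
    · exact hz (Or.inl ((hUmem z).2 ⟨w, hwA, hwz⟩))
    · exact hy (Or.inr ((hWmem y).2 ⟨w, ⟨hwc, hwA⟩, hyw⟩))
  have hRnull : volume R = 0 := by
    apply antichain_null (((cube_meas n)).diff (hUo.union hWo).measurableSet) _ hRanti
    exact Set.diff_subset
  refine ⟨U ∩ cube n, hUo.measurableSet.inter (cube_meas n), ?_, ?_⟩
  · rintro y ⟨hyU, hyc⟩
    obtain ⟨x, hxA, hxy⟩ := (hUmem y).1 hyU
    exact hA.2 x hxA y hyc fun i => (hxy i).le
  · apply measure_mono_null _ hRnull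
    rintro y ⟨hyA, hyS⟩
    have hyc : y ∈ cube n := hA.1 hyA
    refine ⟨hyc, ?_⟩
    rintro (hyU | hyW)
    · exact hyS ⟨hyU, hyc⟩
    · obtain ⟨x, ⟨hxc, hxA⟩, hxy⟩ := (hWmem y).1 hyW
      exact hxA (hA.2 y hyA x hxc fun i => (hxy i).le)

lemma upset_nullMeasurable {n : ℕ} {A : Set (Fin n → ℝ)} (hA : UpSetIn n A) :
    NullMeasurableSet A (volume : Measure (Fin n → ℝ)) := by
  obtain ⟨S, hSm, hSA, hnull⟩ := upset_approx hA
  have : A = S ∪ (A \ S) := (Set.union_diff_cancel hSA).symm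
  rw [this]
  exact hSm.nullMeasurableSet.union (NullMeasurableSet.of_null hnull)

lemma levelset_upset {n : ℕ} {f : (Fin n → ℝ) → ℝ} (hf : IsMonoCube n f) (t : ℝ) :
    UpSetIn n {x ∈ cube n | t < f x} := by
  refine ⟨fun x hx => hx.1, ?_⟩
  rintro x ⟨hxc, hxt⟩ y hyc hxy
  exact ⟨hyc, lt_of_lt_of_le hxt (hf.2 x hxc y hyc hxy)⟩

lemma mono_aemeasurable {n : ℕ} {f : (Fin n → ℝ) → ℝ} (hf : IsMonoCube n f) :
    AEMeasurable f (volume.restrict (cube n)) := by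
  set G : (Fin n → ℝ) → ℝ := (cube n).indicator f with hG
  have hGnm : NullMeasurable G (volume : Measure (Fin n → ℝ)) := by
    have key : ∀ t : ℝ, NullMeasurableSet (G ⁻¹' Set.Ioi t) (volume : Measure (Fin n → ℝ)) := by
      intro t
      have hup : NullMeasurableSet {x ∈ cube n | t < f x} volume :=
        upset_nullMeasurable (levelset_upset hf t)
      by_cases ht : 0 ≤ t
      · have : G ⁻¹' Set.Ioi t = {x ∈ cube n | t < f x} := by
          ext x
          simp only [Set.mem_preimage, Set.mem_Ioi, Set.mem_setOf_eq, hG]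
          by_cases hx : x ∈ cube n
          · simp [Set.indicator_of_mem hx, hx]
          · simp only [Set.indicator_of_notMem hx]
            simp [hx]
            exact ht
        rw [this]; exact hup
      · have : G ⁻¹' Set.Ioi t = (cube n)ᶜ ∪ {x ∈ cube n | t < f x} := by
          ext x
          simp only [Set.mem_preimage, Set.mem_Ioi, Set.mem_union, Set.mem_compl_iff,
            Set.mem_setOf_eq, hG]
          by_cases hx : x ∈ cube n
          · simp [Set.indicator_of_mem hx, hx]
          · simp [Set.indicator_of_notMem hx, hx]
            linarith
        rw [this]
        exact ((cube_meas n).compl.nullMeasurableSet).union hup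
    exact fun s hs =>
      measurable_of_Ioi (δ := NullMeasurableSpace (Fin n → ℝ) volume) (f := G) key hs
  have hGae : AEMeasurable G (volume : Measure (Fin n → ℝ)) := hGnm.aemeasurable
  refine (hGae.restrict (s := cube n)).congr ?_
  filter_upwards [ae_restrict_mem (cube_meas n)] with x hx
  simp [hG, Set.indicator_of_mem hx]

lemma integrable_mul_aux {n : ℕ} {a φ : (Fin n → ℝ) → ℝ}
    (ha : AEMeasurable a (volume.restrict (cube n)))
    (hab : ∀ᵐ x ∂(volume.restrict (cube n)), |a x| ≤ 1)
    (hφ : AEMeasurable φ (volume.restrict (cube n))) {C : ℝ}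
    (hφb : ∀ᵐ x ∂(volume.restrict (cube n)), |φ x| ≤ C) :
    Integrable (fun x => a x * φ x) (volume.restrict (cube n)) := by
  haveI := cube_finite n
  refine Integrable.mono' (integrable_const C) ((ha.mul hφ).aestronglyMeasurable) ?_
  filter_upwards [hab, hφb] with x h1 h2
  rw [Real.norm_eq_abs, abs_mul]
  nlinarith [abs_nonneg (φ x), abs_nonneg (a x)]

/-- `f ∈ ℱ` is an exposed point of `ℱ` iff `f` equals the indicator of
an up-set `A ⊆ [0,1]^n` almost everywhere. -/
theorem stmt16 (n : ℕ) (hn : 1 ≤ n) (f : (Fin n → ℝ) → ℝ) (hf : IsMonoCube n f) :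
    ExposedPtF n f ↔
      ∃ A : Set (Fin n → ℝ), UpSetIn n A ∧
        f =ᵐ[volume.restrict (cube n)] A.indicator 1 := by
  classical
  have hae_cube := ae_restrict_mem (μ := (volume : Measure (Fin n → ℝ))) (cube_meas n)
  have hfa := mono_aemeasurable hf
  have hfb : ∀ᵐ x ∂(volume.restrict (cube n)), |f x| ≤ 1 := by
    filter_upwards [hae_cube] with x hx
    have := hf.1 x hx
    rw [abs_le]
    exact ⟨by linarith [this.1], this.2⟩
  constructor
  · rintro ⟨-, φ, hφm, ⟨C, hC⟩, hsep⟩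
    set g1 : (Fin n → ℝ) → ℝ := fun x => f x * f x with hg1def
    set g2 : (Fin n → ℝ) → ℝ := fun x => 2 * f x - f x * f x with hg2def
    have hg1 : IsMonoCube n g1 := by
      constructor
      · intro x hx
        have := hf.1 x hx
        refine ⟨?_, ?_⟩
        · show (0:ℝ) ≤ f x * f x
          nlinarith [this.1, this.2]
        · show f x * f x ≤ 1
          nlinarith [this.1, this.2]
      · intro x hx y hy hxy
        have h1 := hf.1 x hx
        have h2 := hf.1 y hy
        have h3 := hf.2 x hx y hy hxy
        show f x * f x ≤ f y * f y
        nlinarith [h1.1, h1.2, h2.1, h2.2]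
    have hg2 : IsMonoCube n g2 := by
      constructor
      · intro x hx
        have := hf.1 x hx
        refine ⟨?_, ?_⟩
        · show (0:ℝ) ≤ 2 * f x - f x * f x
          nlinarith [this.1, this.2]
        · show 2 * f x - f x * f x ≤ 1
          nlinarith [this.1, this.2]
      · intro x hx y hy hxy
        have h1 := hf.1 x hx
        have h2 := hf.1 y hy
        have h3 := hf.2 x hx y hy hxy
        show 2 * f x - f x * f x ≤ 2 * f y - f y * f y
        nlinarith [h1.1, h1.2, h2.1, h2.2]
    have hkey : f =ᵐ[volume.restrict (cube n)] g1 := by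
      by_contra hne
      have hne1 : ¬ g1 =ᵐ[volume.restrict (cube n)] f := fun h => hne h.symm
      have hne2 : ¬ g2 =ᵐ[volume.restrict (cube n)] f := by
        intro h
        apply hne
        filter_upwards [h] with x hx
        have hx' : 2 * f x - f x * f x = f x := hx
        show f x = f x * f x
        linarith
      have i1 := hsep g1 hg1 hne1
      have i2 := hsep g2 hg2 hne2
      have hb1 : ∀ᵐ x ∂(volume.restrict (cube n)), |g1 x| ≤ 1 := by
        filter_upwards [hae_cube] with x hx
        have := hf.1 x hx
        show |f x * f x| ≤ 1
        rw [abs_le]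
        constructor <;> nlinarith [this.1, this.2]
      have hb2 : ∀ᵐ x ∂(volume.restrict (cube n)), |g2 x| ≤ 1 := by
        filter_upwards [hae_cube] with x hx
        have := hf.1 x hx
        show |2 * f x - f x * f x| ≤ 1
        rw [abs_le]
        constructor <;> nlinarith [this.1, this.2]
      have hI1 : Integrable (fun x => g1 x * φ x) (volume.restrict (cube n)) :=
        integrable_mul_aux (hfa.mul hfa) hb1 hφm.aemeasurable hC
      have hI2 : Integrable (fun x => g2 x * φ x) (volume.restrict (cube n)) :=
        integrable_mul_aux ((aemeasurable_const.mul hfa).sub (hfa.mul hfa)) hb2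
          hφm.aemeasurable hC
      have hsum : (∫ x in cube n, g1 x * φ x) + (∫ x in cube n, g2 x * φ x)
          = 2 * ∫ x in cube n, f x * φ x := by
        rw [← integral_add hI1 hI2, ← integral_const_mul]
        refine integral_congr_ae (Filter.Eventually.of_forall fun x => ?_)
        show f x * f x * φ x + (2 * f x - f x * f x) * φ x = 2 * (f x * φ x)
        ring
      linarith
    refine ⟨{x ∈ cube n | (1:ℝ)/2 < f x}, levelset_upset hf _, ?_⟩
    filter_upwards [hkey, hae_cube] with x hx01 hxc
    have hx01 : f x = f x * f x := hx01
    have hval : f x = 0 ∨ f x = 1 := by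
      have h : f x * (f x - 1) = 0 := by nlinarith
      rcases mul_eq_zero.1 h with h | h
      · exact Or.inl h
      · exact Or.inr (by linarith)
    rcases hval with h | h
    · have hxA : x ∉ {x ∈ cube n | (1:ℝ)/2 < f x} := by
        simp only [Set.mem_setOf_eq, not_and]
        intro _
        rw [h]; norm_num
      rw [Set.indicator_of_notMem hxA, h]
    · have hxA : x ∈ {x ∈ cube n | (1:ℝ)/2 < f x} := ⟨hxc, by rw [h]; norm_num⟩
      rw [Set.indicator_of_mem hxA, h, Pi.one_apply]
  · rintro ⟨A, hA, hfA⟩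
    obtain ⟨S, hSm, hSA, hnull⟩ := upset_approx hA
    have hfS : f =ᵐ[volume.restrict (cube n)] S.indicator 1 := by
      refine hfA.trans (ae_restrict_of_ae ?_)
      have h0 : {x | ¬ A.indicator (1 : (Fin n → ℝ) → ℝ) x = S.indicator 1 x} ⊆ A \ S := by
        intro x hx
        simp only [Set.mem_setOf_eq] at hx
        by_cases hxS : x ∈ S
        · exact absurd (by rw [Set.indicator_of_mem hxS, Set.indicator_of_mem (hSA hxS)]) hx
        · by_cases hxA : x ∈ A
          · exact ⟨hxA, hxS⟩
          · exact absurd (by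
              rw [Set.indicator_of_notMem hxS, Set.indicator_of_notMem hxA]) hx
      show ∀ᵐ x ∂(volume : Measure (Fin n → ℝ)), A.indicator 1 x = S.indicator 1 x
      rw [ae_iff]
      exact measure_mono_null h0 hnull
    refine ⟨hf, fun x => 2 * S.indicator 1 x - 1, ?_, ⟨1, ?_⟩, ?_⟩
    · exact (measurable_const.mul (measurable_one.indicator hSm)).sub measurable_const
    · refine Filter.Eventually.of_forall fun x => ?_
      show |2 * S.indicator 1 x - 1| ≤ 1
      by_cases hxS : x ∈ S
      · rw [Set.indicator_of_mem hxS, Pi.one_apply]; norm_num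
      · rw [Set.indicator_of_notMem hxS]; norm_num
    · intro g hg hne
      set φ : (Fin n → ℝ) → ℝ := fun x => 2 * S.indicator 1 x - 1 with hφdef
      have hφm : Measurable φ :=
        (measurable_const.mul (measurable_one.indicator hSm)).sub measurable_const
      have hφb : ∀ x, |φ x| ≤ 1 := by
        intro x
        show |2 * S.indicator 1 x - 1| ≤ 1
        by_cases hxS : x ∈ S
        · rw [Set.indicator_of_mem hxS, Pi.one_apply]; norm_num
        · rw [Set.indicator_of_notMem hxS]; norm_num
      have hga := mono_aemeasurable hg
      have hgb : ∀ᵐ x ∂(volume.restrict (cube n)), |g x| ≤ 1 := by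
        filter_upwards [hae_cube] with x hx
        have := hg.1 x hx
        rw [abs_le]
        exact ⟨by linarith [this.1], this.2⟩
      have hIg : Integrable (fun x => g x * φ x) (volume.restrict (cube n)) :=
        integrable_mul_aux hga hgb hφm.aemeasurable (Filter.Eventually.of_forall hφb)
      have hIf : Integrable (fun x => f x * φ x) (volume.restrict (cube n)) :=
        integrable_mul_aux hfa hfb hφm.aemeasurable (Filter.Eventually.of_forall hφb)
      set h0 : (Fin n → ℝ) → ℝ := fun x => (S.indicator 1 x - g x) * φ x with hh0def
      have heq : (fun x => f x * φ x - g x * φ x) =ᵐ[volume.restrict (cube n)] h0 := by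
        filter_upwards [hfS] with x hx
        show f x * φ x - g x * φ x = (S.indicator 1 x - g x) * φ x
        rw [hx]
        ring
      have hInt0 : Integrable h0 (volume.restrict (cube n)) := (hIf.sub hIg).congr heq
      have hnn : 0 ≤ᵐ[volume.restrict (cube n)] h0 := by
        filter_upwards [hae_cube] with x hx
        have hgx := hg.1 x hx
        show (0:ℝ) ≤ (S.indicator 1 x - g x) * (2 * S.indicator 1 x - 1)
        by_cases hxS : x ∈ S
        · rw [Set.indicator_of_mem hxS, Pi.one_apply]
          nlinarith [hgx.1, hgx.2]
        · rw [Set.indicator_of_notMem hxS]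
          nlinarith [hgx.1, hgx.2]
      have hpos : 0 < ∫ x in cube n, h0 x := by
        rcases (integral_nonneg_of_ae hnn).lt_or_eq with h | h
        · exact h
        · exfalso
          have hz : h0 =ᵐ[volume.restrict (cube n)] 0 :=
            (integral_eq_zero_iff_of_nonneg_ae hnn hInt0).1 h.symm
          apply hne
          filter_upwards [hz, hae_cube, hfS] with x hx0 hxc hxf
          have hx0 : (S.indicator 1 x - g x) * (2 * S.indicator 1 x - 1) = 0 := hx0
          rw [hxf]
          by_cases hxS : x ∈ S
          · rw [Set.indicator_of_mem hxS, Pi.one_apply] at hx0 ⊢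
            nlinarith [hx0]
          · rw [Set.indicator_of_notMem hxS] at hx0 ⊢
            nlinarith [hx0]
      have hdiff : (∫ x in cube n, f x * φ x) - (∫ x in cube n, g x * φ x)
          = ∫ x in cube n, h0 x := by
        rw [← integral_sub hIf hIg]
        exact integral_congr_ae heq
      linarith
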